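/- arXiv:2209.00073 — 2 statements merged into one kernel-verified Lean document; each statement's English description precedes it below -/
import Mathlib

section
/- Let N > 2 and p > 1, set α := 2/(p-1) and λ := (2/(p-1))(N - 2p/(p-1)), and define u(x) := |x|^{-α} - 1 for x ∈ ℝ^N \ {0}. Then u is smooth on ℝ^N \ {0} and satisfies -Δu(x) = λ (1 + u(x))^p for all x ≠ 0, and u(x) = 0 whenever |x| = 1. Moreover λ > 0 if and only if p > N/(N-2). -/
noncomputable section

open RealInnerProductSpace

variable {N : ℕ}
local notation "E" => EuclideanSpace ℝ (Fin N)

lemma inner_self_pos' (x : E) (hx : x ≠ 0) : (0:ℝ) < ⟪x, x⟫ := by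
  rw [real_inner_self_eq_norm_sq]
  exact pow_pos (norm_pos_iff.mpr hx) 2

lemma hasFDerivAt_q (x : E) :
    HasFDerivAt (fun y : E => ⟪y, y⟫) ((2:ℝ) • innerSL ℝ x) x := by
  have h := (hasFDerivAt_id x).inner ℝ (hasFDerivAt_id x)
  refine h.congr_fderiv ?_
  ext v
  simp [fderivInnerCLM, real_inner_comm, two_mul, mul_comm]

lemma hasFDerivAt_qpow (c : ℝ) (x : E) (hx : x ≠ 0) :
    HasFDerivAt (fun y : E => ⟪y, y⟫ ^ c)
      ((2 * c * ⟪x, x⟫ ^ (c - 1)) • innerSL ℝ x) x := by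
  have hr : ⟪x, x⟫ ≠ (0:ℝ) := ne_of_gt (inner_self_pos' x hx)
  have hh : HasDerivAt (fun t : ℝ => t ^ c) (c * ⟪x, x⟫ ^ (c - 1)) ⟪x, x⟫ :=
    Real.hasDerivAt_rpow_const (Or.inl hr)
  have h := HasDerivAt.comp_hasFDerivAt (f := fun y : E => ⟪y, y⟫) x hh (hasFDerivAt_q x)
  refine h.congr_fderiv ?_
  rw [smul_smul]
  ring_nf

/-- The Laplacian of `u : ℝ^N → ℝ` at `x`: the trace of the second Fréchet derivative,
computed along the standard orthonormal basis of `EuclideanSpace ℝ (Fin N)`. -/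
def lap {N : ℕ} (u : EuclideanSpace ℝ (Fin N) → ℝ) (x : EuclideanSpace ℝ (Fin N)) : ℝ :=
  ∑ i : Fin N, iteratedFDeriv ℝ 2 u x ![EuclideanSpace.single i 1, EuclideanSpace.single i 1]

lemma hasFDerivAt_v (c : ℝ) (y : E) (hy : y ≠ 0) :
    HasFDerivAt (fun z : E => ⟪z, z⟫ ^ (c/2) - 1)
      ((c * ⟪y, y⟫ ^ (c/2 - 1)) • innerSL ℝ y) y := by
  have h := (hasFDerivAt_qpow (c/2) y hy).sub_const 1
  refine h.congr_fderiv ?_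
  congr 1
  ring

lemma lap_v (c : ℝ) (x : E) (hx : x ≠ 0) :
    lap (fun z : E => ⟪z, z⟫ ^ (c/2) - 1) x
      = c * (c + (N:ℝ) - 2) * ⟪x, x⟫ ^ (c/2 - 1) := by
  have hr : (0:ℝ) < ⟪x, x⟫ := inner_self_pos' x hx
  set B : E →L[ℝ] E →L[ℝ] ℝ := (innerSL ℝ : E →L⋆[ℝ] E →L[ℝ] ℝ) with hB
  set G : E → (E →L[ℝ] ℝ) := fun y => (c * ⟪y, y⟫ ^ (c/2 - 1)) • innerSL ℝ y with hGdef
  have hs : HasFDerivAt (fun y : E => c * ⟪y, y⟫ ^ (c/2 - 1))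
      (c • ((2 * (c/2 - 1) * ⟪x, x⟫ ^ (c/2 - 1 - 1)) • innerSL ℝ x)) x :=
    (hasFDerivAt_qpow (c/2 - 1) x hx).const_mul c
  have hL : HasFDerivAt (fun y : E => innerSL ℝ y) B x := B.hasFDerivAt
  have hG : HasFDerivAt G
      ((c * ⟪x, x⟫ ^ (c/2 - 1)) • B +
        (c • ((2 * (c/2 - 1) * ⟪x, x⟫ ^ (c/2 - 1 - 1)) • innerSL ℝ x)).smulRight
          (innerSL ℝ x)) x := hs.smul hL
  have hev : fderiv ℝ (fun z : E => ⟪z, z⟫ ^ (c/2) - 1) =ᶠ[nhds x] G := by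
    filter_upwards [compl_singleton_mem_nhds hx] with y hy
    exact (hasFDerivAt_v c y hy).fderiv
  have key : fderiv ℝ (fderiv ℝ (fun z : E => ⟪z, z⟫ ^ (c/2) - 1)) x
      = (c * ⟪x, x⟫ ^ (c/2 - 1)) • B +
        (c • ((2 * (c/2 - 1) * ⟪x, x⟫ ^ (c/2 - 1 - 1)) • innerSL ℝ x)).smulRight
          (innerSL ℝ x) := by
    rw [hev.fderiv_eq, hG.fderiv]
  unfold lap
  simp only [iteratedFDeriv_two_apply, Matrix.cons_val_zero, Matrix.cons_val_one, Matrix.head_cons,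
    key, ContinuousLinearMap.add_apply, ContinuousLinearMap.smul_apply,
    ContinuousLinearMap.smulRight_apply, hB, innerSL_apply_apply, smul_eq_mul]
  have hinner1 : ∀ i : Fin N, ⟪(EuclideanSpace.single i (1:ℝ)), (EuclideanSpace.single i (1:ℝ))⟫ = (1:ℝ) := by
    intro i
    simp [EuclideanSpace.inner_single_left, EuclideanSpace.single_apply]
  have hinner2 : ∀ i : Fin N, ⟪x, EuclideanSpace.single i (1:ℝ)⟫ = x i := by
    intro i
    simp [EuclideanSpace.inner_single_right]
  simp only [hinner1, hinner2, mul_one]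
  have hinner1' : ∀ i : Fin N, (innerSL ℝ) (EuclideanSpace.single i (1:ℝ)) (EuclideanSpace.single i (1:ℝ)) = (1:ℝ) :=
    fun i => hinner1 i
  simp only [hinner1', mul_one]
  rw [Finset.sum_add_distrib, Finset.sum_const, Finset.card_univ, Fintype.card_fin]
  have hx2 : ∑ i : Fin N, c * (2 * (c/2 - 1) * ⟪x, x⟫ ^ (c/2 - 1 - 1)) * x i * x i
      = c * (c - 2) * ⟪x, x⟫ ^ (c/2 - 1 - 1) * ⟪x, x⟫ := by
    have : ⟪x, x⟫ = ∑ i : Fin N, x i * x i := by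
      simp only [PiLp.inner_apply, RCLike.inner_apply, conj_trivial]
    rw [this, Finset.mul_sum]
    apply Finset.sum_congr rfl
    intro i _
    ring
  have hx2' : ∑ i : Fin N, c * (2 * (c/2 - 1) * ⟪x, x⟫ ^ (c/2 - 1 - 1) * x i) * x i
      = c * (c - 2) * ⟪x, x⟫ ^ (c/2 - 1 - 1) * ⟪x, x⟫ := by
    rw [← hx2]; apply Finset.sum_congr rfl; intro i _; ring
  rw [hx2', nsmul_eq_mul]
  have hpow : ⟪x, x⟫ ^ (c/2 - 1 - 1) * ⟪x, x⟫ = ⟪x, x⟫ ^ (c/2 - 1) := by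
    nth_rewrite 2 [show ⟪x, x⟫ = ⟪x, x⟫ ^ (1:ℝ) from (Real.rpow_one _).symm]
    rw [← Real.rpow_add hr]
    ring_nf
  rw [mul_assoc (c * (c-2)), hpow]
  ring

/-- For `α = 2/(p-1)` and `λ = (2/(p-1))(N - 2p/(p-1))`, the function
`u(x) = |x|^{-α} - 1` is smooth away from the origin, satisfies `-Δu = λ(1+u)^p` for
`x ≠ 0` and vanishes on the unit sphere; moreover `λ > 0 ↔ p > N/(N-2)`. -/
theorem statement15 (N : ℕ) (hN : 2 < N) (p : ℝ) (hp : 1 < p) :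
    let α : ℝ := 2 / (p - 1)
    let lam : ℝ := 2 / (p - 1) * ((N : ℝ) - 2 * p / (p - 1))
    let u : EuclideanSpace ℝ (Fin N) → ℝ := fun x => ‖x‖ ^ (-α) - 1
    ContDiffOn ℝ (⊤ : ℕ∞) u {x : EuclideanSpace ℝ (Fin N) | x ≠ 0} ∧
      (∀ x : EuclideanSpace ℝ (Fin N), x ≠ 0 →
        -lap u x = lam * (1 + u x) ^ p) ∧
      (∀ x : EuclideanSpace ℝ (Fin N), ‖x‖ = 1 → u x = 0) ∧
      (0 < lam ↔ (N : ℝ) / ((N : ℝ) - 2) < p) := by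
  intro α lam u
  have hp1 : (0:ℝ) < p - 1 := by linarith
  set c : ℝ := -α with hc
  have hu : u = fun z : EuclideanSpace ℝ (Fin N) => ⟪z, z⟫ ^ (c/2) - 1 := by
    funext z
    show ‖z‖ ^ (-α) - 1 = _
    rw [real_inner_self_eq_norm_sq, ← Real.rpow_natCast ‖z‖ 2,
      ← Real.rpow_mul (norm_nonneg z)]
    norm_num
    congr 1
    rw [hc]
    ring
  refine ⟨?_, ?_, ?_, ?_⟩
  · intro x hx
    have h1 : ContDiffAt ℝ (⊤ : ℕ∞) (fun y : EuclideanSpace ℝ (Fin N) => ‖y‖) x :=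
      contDiffAt_norm ℝ hx
    have h2 : ContDiffAt ℝ (⊤ : ℕ∞) u x :=
      (h1.rpow_const_of_ne (p := -α) (norm_ne_zero_iff.mpr hx)).sub
        (contDiffAt_const (c := (1:ℝ)))
    exact h2.contDiffWithinAt
  · intro x hx
    have hr : (0:ℝ) < ⟪x, x⟫ := inner_self_pos' x hx
    rw [hu, lap_v c x hx]
    have h1 : 1 + ((⟪x, x⟫:ℝ) ^ (c/2) - 1) = (⟪x, x⟫:ℝ) ^ (c/2) := by ring
    rw [h1, ← Real.rpow_mul hr.le]
    have hexp : c/2 * p = c/2 - 1 := by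
      show -α/2 * p = -α/2 - 1
      show -(2/(p-1))/2 * p = -(2/(p-1))/2 - 1
      field_simp
      ring
    rw [hexp]
    have hcoef : -(c * (c + (N:ℝ) - 2)) = lam := by
      show -(-α * (-α + (N:ℝ) - 2)) = 2 / (p - 1) * ((N : ℝ) - 2 * p / (p - 1))
      show -(-(2/(p-1)) * (-(2/(p-1)) + (N:ℝ) - 2)) = _
      field_simp
      ring
    rw [← hcoef]
    ring
  · intro x hx
    show ‖x‖ ^ (-α) - 1 = 0
    rw [hx, Real.one_rpow]
    ring
  · have hN2 : (0:ℝ) < (N:ℝ) - 2 := by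
      have : (2:ℝ) < (N:ℝ) := by exact_mod_cast hN
      linarith
    have hsq : (0:ℝ) < (p-1)^2 := by positivity
    have key : lam = 2*((N:ℝ)*(p-1) - 2*p)/((p-1)^2) := by
      show 2 / (p - 1) * ((N : ℝ) - 2 * p / (p - 1)) = _
      field_simp
    rw [key, div_lt_iff₀ hN2, lt_div_iff₀ hsq, zero_mul]
    constructor
    · intro h; nlinarith
    · intro h; nlinarith
end
end

section
/- Let N > 2, μ < 2 and p > 1, set α := (2-μ)/(p-1) and λ := ((2-μ)/(p-1))(N - 2 - (2-μ)/(p-1)), and define u(x) := |x|^{-α} - 1 for x ∈ ℝ^N \ {0}. Then u is smooth on ℝ^N \ {0} and satisfies -Δu(x) = λ |x|^{-μ} (1 + u(x))^p for all x ≠ 0, and u(x) = 0 whenever |x| = 1. Moreover λ > 0 if and only if p > (N-μ)/(N-2). -/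
noncomputable section

open Real

lemma hasFDerivAt_norm_rpow' {N : ℕ} (r : ℝ) {x : EuclideanSpace ℝ (Fin N)} (hx : x ≠ 0) :
    HasFDerivAt (fun y : EuclideanSpace ℝ (Fin N) => ‖y‖ ^ r)
      ((r * ‖x‖ ^ (r - 2)) • (innerSL ℝ x)) x := by
  have hn : ‖x‖ ≠ 0 := norm_ne_zero_iff.mpr hx
  have h2 : (‖x‖ ^ 2 : ℝ) ≠ 0 := pow_ne_zero _ hn
  have h := ((hasStrictFDerivAt_norm_sq x).hasFDerivAt.rpow_const (p := r / 2) (Or.inl h2))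
  have hfun : (fun y : EuclideanSpace ℝ (Fin N) => (‖y‖ ^ 2 : ℝ) ^ (r / 2)) =
      fun y : EuclideanSpace ℝ (Fin N) => ‖y‖ ^ r := by
    funext y
    rw [← Real.rpow_natCast ‖y‖ 2, ← Real.rpow_mul (norm_nonneg y)]
    congr 1
    push_cast
    ring
  rw [hfun] at h
  refine h.congr_fderiv ?_
  ext y
  have hkey : ((‖x‖ ^ 2 : ℝ)) ^ (r / 2 - 1) = ‖x‖ ^ (r - 2) := by
    rw [← Real.rpow_natCast ‖x‖ 2, ← Real.rpow_mul (norm_nonneg x)]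
    congr 1
    push_cast
    ring
  simp only [ContinuousLinearMap.smul_apply, smul_eq_mul, two_smul,
    ContinuousLinearMap.add_apply, hkey]
  ring

set_option maxHeartbeats 1000000 in
lemma lap_norm_rpow {N : ℕ} (r c : ℝ) {x : EuclideanSpace ℝ (Fin N)} (hx : x ≠ 0) :
    lap (fun y => ‖y‖ ^ r - c) x = r * ((N : ℝ) + r - 2) * ‖x‖ ^ (r - 2) := by
  have hn : (0:ℝ) < ‖x‖ := norm_pos_iff.mpr hx
  set F : EuclideanSpace ℝ (Fin N) → EuclideanSpace ℝ (Fin N) →L[ℝ] ℝ :=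
    fun y => (r * ‖y‖ ^ (r - 2)) • (innerSL ℝ y) with hF
  have hFd : ∀ y : EuclideanSpace ℝ (Fin N), y ≠ 0 →
      HasFDerivAt (fun z : EuclideanSpace ℝ (Fin N) => ‖z‖ ^ r - c) (F y) y :=
    fun y hy => (hasFDerivAt_norm_rpow' r hy).sub_const c
  have heq : fderiv ℝ (fun z : EuclideanSpace ℝ (Fin N) => ‖z‖ ^ r - c) =ᶠ[nhds x] F := by
    filter_upwards [isOpen_ne.mem_nhds hx] with y hy using (hFd y hy).fderiv
  have hs : HasFDerivAt (fun y : EuclideanSpace ℝ (Fin N) => r * ‖y‖ ^ (r - 2))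
      (r • (((r - 2) * ‖x‖ ^ (r - 2 - 2)) • (innerSL ℝ x))) x :=
    (hasFDerivAt_norm_rpow' (r - 2) hx).const_mul r
  set B : EuclideanSpace ℝ (Fin N) →L[ℝ] EuclideanSpace ℝ (Fin N) →L[ℝ] ℝ :=
    (isBoundedBilinearMap_inner (𝕜 := ℝ) (E := EuclideanSpace ℝ (Fin N))).toContinuousLinearMap
    with hB
  have hBapp : ∀ y w : EuclideanSpace ℝ (Fin N), B y w = (inner ℝ y w : ℝ) := fun _ _ => rfl
  have hBinner : ∀ y : EuclideanSpace ℝ (Fin N), B y = innerSL ℝ y := by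
    intro y; ext w; rw [hBapp, innerSL_apply_apply]
  have hF' : F = fun y => (r * ‖y‖ ^ (r - 2)) • B y := by
    funext y; rw [hF, hBinner]
  have hlin : HasFDerivAt (fun y : EuclideanSpace ℝ (Fin N) => B y) B x := B.hasFDerivAt
  have hFD : HasFDerivAt F
      ((r * ‖x‖ ^ (r - 2)) • B +
        (r • (((r - 2) * ‖x‖ ^ (r - 2 - 2)) • (innerSL ℝ x))).smulRight (B x)) x := by
    rw [hF']
    exact hs.smul hlin
  have h2 : fderiv ℝ (fderiv ℝ (fun z : EuclideanSpace ℝ (Fin N) => ‖z‖ ^ r - c)) x =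
      (r * ‖x‖ ^ (r - 2)) • B +
        (r • (((r - 2) * ‖x‖ ^ (r - 2 - 2)) • (innerSL ℝ x))).smulRight (B x) := by
    rw [heq.fderiv_eq, hFD.fderiv]
  unfold lap
  have happ : ∀ i : Fin N,
      iteratedFDeriv ℝ 2 (fun z : EuclideanSpace ℝ (Fin N) => ‖z‖ ^ r - c) x
        ![EuclideanSpace.single i 1, EuclideanSpace.single i 1] =
      r * ‖x‖ ^ (r - 2) *
        (inner ℝ (EuclideanSpace.single i (1:ℝ)) (EuclideanSpace.single i (1:ℝ)) : ℝ) +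
        r * ((r - 2) * ‖x‖ ^ (r - 2 - 2)) *
          ((inner ℝ x (EuclideanSpace.single i (1:ℝ)) : ℝ) *
            (inner ℝ x (EuclideanSpace.single i (1:ℝ)) : ℝ)) := by
    intro i
    rw [iteratedFDeriv_two_apply]
    simp only [Matrix.cons_val_zero, Matrix.cons_val_one, Matrix.head_cons, h2]
    simp only [ContinuousLinearMap.add_apply, ContinuousLinearMap.smul_apply,
      ContinuousLinearMap.smulRight_apply, smul_eq_mul, innerSL_apply_apply, hBapp]
    ring
  rw [Finset.sum_congr rfl fun i _ => happ i]
  rw [Finset.sum_add_distrib, ← Finset.mul_sum, ← Finset.mul_sum]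
  have hself : ∀ i : Fin N,
      (inner ℝ (EuclideanSpace.single i (1:ℝ)) (EuclideanSpace.single i (1:ℝ)) : ℝ) = 1 := by
    intro i
    rw [EuclideanSpace.inner_single_left]
    simp
  have hxsum : (∑ i : Fin N, (inner ℝ x (EuclideanSpace.single i (1:ℝ)) : ℝ) *
      (inner ℝ x (EuclideanSpace.single i (1:ℝ)) : ℝ)) = ‖x‖ ^ (2:ℕ) := by
    have hix : ∀ i : Fin N, (inner ℝ x (EuclideanSpace.single i (1:ℝ)) : ℝ) = x i := by
      intro i
      rw [EuclideanSpace.inner_single_right]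
      simp
    simp_rw [hix]
    rw [← real_inner_self_eq_norm_sq]
    simp only [PiLp.inner_apply, RCLike.inner_apply, conj_trivial]
  rw [Finset.sum_congr rfl fun i _ => hself i, hxsum]
  have hpow : ‖x‖ ^ (r - 2 - 2) * ‖x‖ ^ (2:ℕ) = ‖x‖ ^ (r - 2) := by
    rw [← Real.rpow_natCast ‖x‖ 2, ← Real.rpow_add hn]
    norm_num
  simp only [Finset.sum_const, Finset.card_univ, Fintype.card_fin, nsmul_eq_mul]
  linear_combination (r * (r - 2)) * hpow

/-- For `μ < 2`, `α = (2-μ)/(p-1)` and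
`λ = ((2-μ)/(p-1))(N - 2 - (2-μ)/(p-1))`, the function `u(x) = |x|^{-α} - 1` is smooth away
from the origin, satisfies `-Δu = λ|x|^{-μ}(1+u)^p` for `x ≠ 0` and vanishes on the unit
sphere; moreover `λ > 0 ↔ p > (N-μ)/(N-2)`. -/
theorem statement16 (N : ℕ) (hN : 2 < N) (μ p : ℝ) (hμ : μ < 2) (hp : 1 < p) :
    let α : ℝ := (2 - μ) / (p - 1)
    let lam : ℝ := (2 - μ) / (p - 1) * ((N : ℝ) - 2 - (2 - μ) / (p - 1))
    let u : EuclideanSpace ℝ (Fin N) → ℝ := fun x => ‖x‖ ^ (-α) - 1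
    ContDiffOn ℝ (⊤ : ℕ∞) u {x : EuclideanSpace ℝ (Fin N) | x ≠ 0} ∧
      (∀ x : EuclideanSpace ℝ (Fin N), x ≠ 0 →
        -lap u x = lam * ‖x‖ ^ (-μ) * (1 + u x) ^ p) ∧
      (∀ x : EuclideanSpace ℝ (Fin N), ‖x‖ = 1 → u x = 0) ∧
      (0 < lam ↔ ((N : ℝ) - μ) / ((N : ℝ) - 2) < p) := by
  intro α lam u
  have hp1 : (0:ℝ) < p - 1 := by linarith
  have hαdef : α = (2 - μ) / (p - 1) := rfl
  have hα : 0 < α := div_pos (by linarith) hp1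
  have hN2 : (0:ℝ) < (N:ℝ) - 2 := by
    have : (2:ℝ) < N := by exact_mod_cast hN
    linarith
  have hlam : lam = α * ((N:ℝ) - 2 - α) := rfl
  have hαp : α * (p - 1) = 2 - μ := by
    rw [hαdef]
    field_simp
  refine ⟨?_, ?_, ?_, ?_⟩
  · intro x hx
    have hnx : ‖x‖ ≠ 0 := norm_ne_zero_iff.mpr hx
    refine ContDiffAt.contDiffWithinAt ?_
    exact ((Real.contDiffAt_rpow_const_of_ne hnx).comp x (contDiffAt_norm ℝ hx)).sub
      contDiffAt_const
  · intro x hx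
    have hn : (0:ℝ) < ‖x‖ := norm_pos_iff.mpr hx
    have hl := lap_norm_rpow (-α) 1 hx
    show -lap (fun y : EuclideanSpace ℝ (Fin N) => ‖y‖ ^ (-α) - 1) x =
      lam * ‖x‖ ^ (-μ) * (1 + (‖x‖ ^ (-α) - 1)) ^ p
    rw [show (1 + (‖x‖ ^ (-α) - 1)) = ‖x‖ ^ (-α) by ring]
    rw [← Real.rpow_mul (norm_nonneg x), mul_assoc, ← Real.rpow_add hn]
    have hexp : -μ + -α * p = -α - 2 := by nlinarith [hαp]
    rw [hexp, hl, hlam]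
    ring
  · intro x hx
    show ‖x‖ ^ (-α) - 1 = 0
    rw [hx, Real.one_rpow]
    ring
  · rw [hlam]
    constructor
    · intro h
      have hαlt : α < (N:ℝ) - 2 := by nlinarith
      rw [div_lt_iff₀ hN2]
      have h1 : 2 - μ < ((N:ℝ) - 2) * (p - 1) := by
        rw [hαdef] at hαlt
        exact (div_lt_iff₀ hp1).mp hαlt
      nlinarith
    · intro h
      have h1 : (N:ℝ) - μ < p * ((N:ℝ) - 2) := (div_lt_iff₀ hN2).mp h
      have hαlt : α < (N:ℝ) - 2 := by
        rw [hαdef, div_lt_iff₀ hp1]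
        nlinarith
      nlinarith
end
end
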